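/- Suppose (G_n, c_n), γ_n > 0 and δ_n → 0 satisfy Assumption (EO), with G_n simple and c_n connected. If a random edge (X_1, X_2) of G_n is chosen with probability proportional to its conductance c(X_1, X_2), then for every ε > 0: P( R_eff(X_1 ↔ X_2) ≥ 1/C_{X_1} + 1/C_{X_2} + ε ) ≤ (O(δ_n)/ε) · (1/γ_n). -/

import Mathlib

open MeasureTheory Filter Finset
open Matrix

noncomputable section

set_option linter.unusedSectionVars false

namespace WSTPaper

variable {V : Type} [Fintype V] [DecidableEq V]

/-- The conductance `C_v = Σ_{u ~ v} c(u,v)` of a vertex in the electric network `(G, c)`. -/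
def vertCond (G : SimpleGraph V) [DecidableRel G.Adj] (c : Sym2 V → ℝ) (v : V) : ℝ :=
  ∑ u ∈ G.neighborFinset v, c s(u, v)

/-- The Dirichlet energy of a function `h` on the electric network `(G, c)`. -/
def energy (G : SimpleGraph V) [DecidableRel G.Adj] (c : Sym2 V → ℝ) (h : V → ℝ) : ℝ :=
  (1 / 2) * ∑ v : V, ∑ u ∈ G.neighborFinset v, c s(u, v) * (h u - h v) ^ 2

/-- The effective conductance `C_eff(a ↔ Z)`.  By Dirichlet's principle it equals
`C_a · P_a(τ_Z < τ_a⁺)`, the random-walk characterization of effective conductance. -/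
def effCond (G : SimpleGraph V) [DecidableRel G.Adj] (c : Sym2 V → ℝ) (a : V) (Z : Set V) : ℝ :=
  ⨅ h : {h : V → ℝ // h a = 1 ∧ ∀ z ∈ Z, h z = 0}, energy G c (h : V → ℝ)

/-- The effective resistance `R_eff(a ↔ Z) = 1 / (C_a · P_a(τ_Z < τ_a⁺))`. -/
def effResSet (G : SimpleGraph V) [DecidableRel G.Adj] (c : Sym2 V → ℝ) (a : V) (Z : Set V) :
    ℝ := (effCond G c a Z)⁻¹

/-- The effective resistance `R_eff(a ↔ b) = 1 / (C_a · P_a(τ_b < τ_a⁺))` between two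
vertices of the electric network `(G, c)`. -/
def effRes (G : SimpleGraph V) [DecidableRel G.Adj] (c : Sym2 V → ℝ) (a b : V) : ℝ :=
  effResSet G c a {b}

section Aux

variable (G : SimpleGraph V) [DecidableRel G.Adj] (c : Sym2 V → ℝ)


lemma sum_nbr_eq (F : V → V → ℝ) (u : V) :
    ∑ v ∈ G.neighborFinset u, F u v = ∑ v : V, if G.Adj u v then F u v else 0 := by
  rw [SimpleGraph.neighborFinset_eq_filter, Finset.sum_filter]

lemma sum_nbr_swap (F : V → V → ℝ) :
    ∑ u : V, ∑ v ∈ G.neighborFinset u, F u v = ∑ u : V, ∑ v ∈ G.neighborFinset u, F v u := by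
  have e1 : ∀ (F : V → V → ℝ), ∑ u : V, ∑ v ∈ G.neighborFinset u, F u v
      = ∑ u : V, ∑ v : V, if G.Adj u v then F u v else 0 := fun F =>
    Finset.sum_congr rfl fun u _ => sum_nbr_eq G F u
  rw [e1 F, e1 (fun a b => F b a)]
  rw [Finset.sum_comm]
  refine Finset.sum_congr rfl fun u _ => Finset.sum_congr rfl fun v _ => ?_
  by_cases h : G.Adj u v
  · rw [if_pos h, if_pos h.symm]
  · rw [if_neg h, if_neg (fun h' => h h'.symm)]

lemma csym (a b : V) : c s(a, b) = c s(b, a) := by rw [Sym2.eq_swap]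

lemma c_edge_pos (hpos : ∀ e ∈ G.edgeSet, 0 < c e) {u v : V} (h : G.Adj u v) :
    0 < c s(u, v) := hpos _ (G.mem_edgeSet.2 h)

lemma adj_of_mem_nbr {u v : V} (h : v ∈ G.neighborFinset u) : G.Adj u v := by
  simpa [SimpleGraph.mem_neighborFinset] using h

lemma energy_nonneg (hpos : ∀ e ∈ G.edgeSet, 0 < c e) (h : V → ℝ) : 0 ≤ energy G c h := by
  unfold energy
  have h2 : 0 ≤ ∑ v : V, ∑ u ∈ G.neighborFinset v, c s(u, v) * (h u - h v) ^ 2 :=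
    Finset.sum_nonneg fun v _ => Finset.sum_nonneg fun u hu =>
      mul_nonneg (c_edge_pos G c hpos (adj_of_mem_nbr G hu).symm).le (sq_nonneg _)
  linarith

lemma energy_shift (h : V → ℝ) (m : ℝ) : energy G c (fun w => h w - m) = energy G c h := by
  unfold energy
  congr 1
  refine Finset.sum_congr rfl fun v _ => Finset.sum_congr rfl fun u _ => ?_
  ring_nf

def lap : Matrix V V ℝ := Matrix.of fun u v =>
  (if u = v then vertCond G c u else 0) - (if G.Adj u v then c s(u, v) else 0)

def Kmat : Matrix V V ℝ :=
  lap G c + (Fintype.card V : ℝ)⁻¹ • Matrix.of (fun _ _ => (1 : ℝ))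

lemma mulVec_lap (x : V → ℝ) (u : V) :
    (lap G c *ᵥ x) u = vertCond G c u * x u - ∑ v ∈ G.neighborFinset u, c s(u, v) * x v := by
  simp only [lap, Matrix.mulVec, dotProduct, Matrix.of_apply, sub_mul,
    Finset.sum_sub_distrib, ite_mul, zero_mul]
  congr 1
  · simp
  · rw [sum_nbr_eq G (fun u v => c s(u, v) * x v) u]

lemma dot_lap_eq_energy (x : V → ℝ) : x ⬝ᵥ (lap G c *ᵥ x) = energy G c x := by
  have hl : x ⬝ᵥ (lap G c *ᵥ x)
      = ∑ u : V, ∑ v ∈ G.neighborFinset u, c s(u, v) * (x u ^ 2 - x u * x v) := by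
    simp only [dotProduct, mulVec_lap]
    refine Finset.sum_congr rfl fun u _ => ?_
    rw [mul_sub]
    have h1 : x u * (vertCond G c u * x u) = ∑ v ∈ G.neighborFinset u, c s(u, v) * x u ^ 2 := by
      unfold vertCond
      rw [Finset.sum_mul, Finset.mul_sum]
      refine Finset.sum_congr rfl fun v _ => ?_
      rw [csym c v u]; ring
    have h2 : x u * ∑ v ∈ G.neighborFinset u, c s(u, v) * x v
        = ∑ v ∈ G.neighborFinset u, c s(u, v) * (x u * x v) := by
      rw [Finset.mul_sum]; exact Finset.sum_congr rfl fun v _ => by ring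
    rw [h1, h2, ← Finset.sum_sub_distrib]
    exact Finset.sum_congr rfl fun v _ => by ring
  rw [hl]
  have hsw : ∑ u : V, ∑ v ∈ G.neighborFinset u, c s(u, v) * (x u ^ 2 - x u * x v)
      = ∑ u : V, ∑ v ∈ G.neighborFinset u, c s(u, v) * (x v ^ 2 - x v * x u) := by
    rw [sum_nbr_swap G (fun a b => c s(a, b) * (x a ^ 2 - x a * x b))]
    exact Finset.sum_congr rfl fun u _ => Finset.sum_congr rfl fun v _ => by
      rw [csym c v u]
  have hcomb : ∑ u : V, ∑ v ∈ G.neighborFinset u, c s(u, v) * (x u ^ 2 - x u * x v)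
      = (1/2) * (∑ u : V, ∑ v ∈ G.neighborFinset u, c s(u, v) * (x u ^ 2 - x u * x v)
        + ∑ u : V, ∑ v ∈ G.neighborFinset u, c s(u, v) * (x v ^ 2 - x v * x u)) := by
    rw [← hsw]; ring
  rw [hcomb, ← Finset.sum_add_distrib]
  unfold energy
  congr 1
  refine Finset.sum_congr rfl fun u _ => ?_
  rw [← Finset.sum_add_distrib]
  refine Finset.sum_congr rfl fun v _ => ?_
  rw [csym c v u]; ring

lemma mulVec_J (x : V → ℝ) (u : V) :
    ((Matrix.of (fun _ _ => (1:ℝ)) : Matrix V V ℝ) *ᵥ x) u = ∑ w : V, x w := by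
  simp [Matrix.mulVec, dotProduct]

lemma dot_K (x : V → ℝ) :
    x ⬝ᵥ (Kmat G c *ᵥ x) = energy G c x + (Fintype.card V : ℝ)⁻¹ * (∑ w : V, x w) ^ 2 := by
  unfold Kmat
  rw [Matrix.add_mulVec, dotProduct_add, dot_lap_eq_energy]
  congr 1
  rw [Matrix.smul_mulVec, dotProduct_smul]
  have : x ⬝ᵥ ((Matrix.of (fun _ _ => (1:ℝ)) : Matrix V V ℝ) *ᵥ x) = (∑ w : V, x w) ^ 2 := by
    simp only [dotProduct, mulVec_J]
    rw [← Finset.sum_mul]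
    ring
  rw [this]
  simp [smul_eq_mul]

lemma lap_symm (a b : V) : lap G c a b = lap G c b a := by
  unfold lap
  simp only [Matrix.of_apply]
  by_cases hab : a = b
  · subst hab; rfl
  · rw [if_neg hab, if_neg (Ne.symm hab)]
    by_cases h : G.Adj a b
    · rw [if_pos h, if_pos h.symm, csym c a b]
    · rw [if_neg h, if_neg (fun h' => h h'.symm)]

lemma K_isHermitian : (Kmat G c).IsHermitian := by
  unfold Matrix.IsHermitian
  ext a b
  simp only [Matrix.conjTranspose_apply, star_trivial, Kmat, Matrix.add_apply,
    Matrix.smul_apply, Matrix.of_apply, lap_symm G c b a]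

lemma const_of_energy_zero (hconn : G.Connected) (hpos : ∀ e ∈ G.edgeSet, 0 < c e)
    {x : V → ℝ} (h0 : energy G c x = 0) (a b : V) : x a = x b := by
  have hadj : ∀ {p q : V}, G.Adj p q → x p = x q := by
    intro p q hpq
    have hS : ∑ v : V, ∑ u ∈ G.neighborFinset v, c s(u, v) * (x u - x v) ^ 2 = 0 := by
      unfold energy at h0; linarith
    have hnn : ∀ v ∈ (univ : Finset V), 0 ≤ ∑ u ∈ G.neighborFinset v, c s(u, v) * (x u - x v) ^ 2 :=
      fun v _ => Finset.sum_nonneg fun u hu =>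
        mul_nonneg (c_edge_pos G c hpos (adj_of_mem_nbr G hu).symm).le (sq_nonneg _)
    have h1 := (Finset.sum_eq_zero_iff_of_nonneg hnn).mp hS q (mem_univ q)
    have hnn2 : ∀ u ∈ G.neighborFinset q, 0 ≤ c s(u, q) * (x u - x q) ^ 2 :=
      fun u hu => mul_nonneg (c_edge_pos G c hpos (adj_of_mem_nbr G hu).symm).le (sq_nonneg _)
    have h2 := (Finset.sum_eq_zero_iff_of_nonneg hnn2).mp h1 p
      (by rw [SimpleGraph.mem_neighborFinset]; exact hpq.symm)
    have hcpos : 0 < c s(p, q) := c_edge_pos G c hpos hpq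
    have : (x p - x q) ^ 2 = 0 := by
      rcases mul_eq_zero.mp h2 with h | h
      · exact absurd h hcpos.ne'
      · exact h
    have h3 := (pow_eq_zero_iff two_ne_zero).mp this
    linarith [sub_eq_zero.mp h3]
  obtain ⟨w⟩ := hconn.preconnected a b
  induction w with
  | nil => rfl
  | cons h p ih => exact (hadj h).trans ih

lemma K_posDef (hconn : G.Connected) (hpos : ∀ e ∈ G.edgeSet, 0 < c e) :
    (Kmat G c).PosDef := by
  have : Nonempty V := hconn.nonempty
  have hn : 0 < (Fintype.card V : ℝ) := by
    exact_mod_cast Fintype.card_pos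
  refine Matrix.PosDef.of_dotProduct_mulVec_pos (K_isHermitian G c) fun x hx => ?_
  rw [star_trivial, dot_K]
  have hE := energy_nonneg G c hpos x
  have hT : 0 ≤ (Fintype.card V : ℝ)⁻¹ * (∑ w : V, x w) ^ 2 := by positivity
  rcases lt_or_eq_of_le hE with hE' | hE'
  · linarith
  rcases lt_or_eq_of_le hT with hT' | hT'
  · linarith
  exfalso
  have hsum : (∑ w : V, x w) = 0 := by
    have hSsq : (∑ w : V, x w) ^ 2 = 0 := by
      rcases mul_eq_zero.mp hT'.symm with h | h
      · exact absurd h (by positivity)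
      · exact h
    exact (pow_eq_zero_iff two_ne_zero).mp hSsq
  obtain ⟨a⟩ := ‹Nonempty V›
  have hconst : ∀ b, x b = x a := fun b => const_of_energy_zero G c hconn hpos hE'.symm b a
  have : (∑ w : V, x w) = (Fintype.card V : ℝ) * x a := by
    rw [Finset.sum_congr rfl fun w _ => hconst w]
    simp [Finset.card_univ, mul_comm]
  have hxa : x a = 0 := by
    rw [this] at hsum
    rcases mul_eq_zero.mp hsum with h | h
    · exact absurd h hn.ne'
    · exact h
  exact hx (funext fun b => by simp [hconst b, hxa])

def bvec (u v : V) : V → ℝ := fun w => (if w = u then (1 : ℝ) else 0) - (if w = v then 1 else 0)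

def qres (G : SimpleGraph V) [DecidableRel G.Adj] (c : Sym2 V → ℝ) (u v : V) : ℝ :=
  bvec u v ⬝ᵥ ((Kmat G c)⁻¹ *ᵥ bvec u v)

lemma dot_bvec (u v : V) (x : V → ℝ) : bvec u v ⬝ᵥ x = x u - x v := by
  simp [bvec, dotProduct, sub_mul, ite_mul, Finset.sum_sub_distrib]

lemma bvec_ne_zero {u v : V} (huv : u ≠ v) : bvec u v ≠ 0 := by
  intro h
  have := congrFun h u
  simp [bvec, huv] at this

lemma hKKi (hconn : G.Connected) (hpos : ∀ e ∈ G.edgeSet, 0 < c e) :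
    Kmat G c * (Kmat G c)⁻¹ = 1 :=
  Matrix.mul_nonsing_inv _ ((Matrix.isUnit_iff_isUnit_det _).mp (K_posDef G c hconn hpos).isUnit)

lemma Ki_symm (hconn : G.Connected) (hpos : ∀ e ∈ G.edgeSet, 0 < c e) (a b : V) :
    (Kmat G c)⁻¹ a b = (Kmat G c)⁻¹ b a := by
  have h := (K_posDef G c hconn hpos).inv.1
  have := h.apply b a
  rwa [star_trivial] at this

lemma qres_pos (hconn : G.Connected) (hpos : ∀ e ∈ G.edgeSet, 0 < c e) {u v : V} (huv : u ≠ v) :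
    0 < qres G c u v := by
  have h := (K_posDef G c hconn hpos).inv.dotProduct_mulVec_pos (bvec_ne_zero huv)
  rwa [star_trivial] at h

lemma dot_mulVec_symm (M : Matrix V V ℝ) (hsym : ∀ a b, M a b = M b a) (x y : V → ℝ) :
    x ⬝ᵥ (M *ᵥ y) = y ⬝ᵥ (M *ᵥ x) := by
  simp only [dotProduct, Matrix.mulVec, Finset.mul_sum]
  rw [Finset.sum_comm]
  exact Finset.sum_congr rfl fun a _ => Finset.sum_congr rfl fun b _ => by rw [hsym a b]; ring

lemma inv_qres_le_energy (hconn : G.Connected) (hpos : ∀ e ∈ G.edgeSet, 0 < c e)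
    {u v : V} (huv : u ≠ v) (h : V → ℝ) (hu : h u = 1) (hv : h v = 0) :
    (qres G c u v)⁻¹ ≤ energy G c h := by
  have : Nonempty V := hconn.nonempty
  have hn0 : (0:ℝ) < (Fintype.card V : ℝ) := by exact_mod_cast (Fintype.card_pos (α := V))
  set n : ℝ := (Fintype.card V : ℝ) with hndef
  have hn : 0 < n := hn0
  set x : V → ℝ := fun w => h w - (∑ w : V, h w) / n with hxdef
  have hxsum : ∑ w : V, x w = 0 := by
    rw [Finset.sum_sub_distrib, Finset.sum_const, Finset.card_univ, nsmul_eq_mul, ← hndef]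
    field_simp
    ring
  have hxE : energy G c x = energy G c h := energy_shift G c h _
  set q : ℝ := qres G c u v with hqdef
  have hq : 0 < q := qres_pos G c hconn hpos huv
  set y : V → ℝ := (Kmat G c)⁻¹ *ᵥ bvec u v with hydef
  have hKy : Kmat G c *ᵥ y = bvec u v := by
    rw [hydef, Matrix.mulVec_mulVec, hKKi G c hconn hpos, Matrix.one_mulVec]
  have hKsym : ∀ a b, Kmat G c a b = Kmat G c b a := by
    intro a b
    have := (K_isHermitian G c).apply b a
    rwa [star_trivial] at this
  have hbx : bvec u v ⬝ᵥ x = 1 := by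
    rw [dot_bvec]; simp [hxdef, hu, hv]
  have h0 : 0 ≤ (x - q⁻¹ • y) ⬝ᵥ (Kmat G c *ᵥ (x - q⁻¹ • y)) := by
    have := (K_posDef G c hconn hpos).posSemidef.dotProduct_mulVec_nonneg (x - q⁻¹ • y)
    rwa [star_trivial] at this
  have hxKx : x ⬝ᵥ (Kmat G c *ᵥ x) = energy G c h := by
    rw [dot_K, hxsum, hxE]; ring
  have hxKy : x ⬝ᵥ (Kmat G c *ᵥ y) = 1 := by
    rw [hKy, dotProduct_comm, hbx]
  have hyKx : y ⬝ᵥ (Kmat G c *ᵥ x) = 1 := by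
    rw [dot_mulVec_symm _ hKsym, hxKy]
  have hyKy : y ⬝ᵥ (Kmat G c *ᵥ y) = q := by
    rw [hKy, dotProduct_comm, hqdef, qres, hydef]
  have hexp : (x - q⁻¹ • y) ⬝ᵥ (Kmat G c *ᵥ (x - q⁻¹ • y))
      = energy G c h - 2 * q⁻¹ + q⁻¹ ^ 2 * q := by
    rw [Matrix.mulVec_sub, Matrix.mulVec_smul, sub_dotProduct, smul_dotProduct,
      dotProduct_sub, dotProduct_sub, dotProduct_smul,
      dotProduct_smul, hxKx, hxKy, hyKx, hyKy]
    simp only [smul_eq_mul]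
    ring
  rw [hexp] at h0
  have : q⁻¹ ^ 2 * q = q⁻¹ := by field_simp
  rw [this] at h0
  linarith

lemma admissible_nonempty {u v : V} (huv : u ≠ v) :
    Nonempty {h : V → ℝ // h u = 1 ∧ ∀ z ∈ ({v} : Set V), h z = 0} :=
  ⟨⟨fun w => if w = u then 1 else 0, by simp, fun z hz => by
    rcases hz with rfl
    simp only [if_neg (fun h : z = u => huv h.symm)]⟩⟩

lemma effCond_ge (hconn : G.Connected) (hpos : ∀ e ∈ G.edgeSet, 0 < c e)
    {u v : V} (huv : u ≠ v) : (qres G c u v)⁻¹ ≤ effCond G c u {v} := by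
  have : Nonempty {h : V → ℝ // h u = 1 ∧ ∀ z ∈ ({v} : Set V), h z = 0} :=
    admissible_nonempty huv
  exact le_ciInf fun ⟨h, hu, hz⟩ =>
    inv_qres_le_energy G c hconn hpos huv h hu (hz v rfl)

lemma effCond_pos (hconn : G.Connected) (hpos : ∀ e ∈ G.edgeSet, 0 < c e)
    {u v : V} (huv : u ≠ v) : 0 < effCond G c u {v} :=
  lt_of_lt_of_le (inv_pos.2 (qres_pos G c hconn hpos huv)) (effCond_ge G c hconn hpos huv)

lemma effRes_le_qres (hconn : G.Connected) (hpos : ∀ e ∈ G.edgeSet, 0 < c e)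
    {u v : V} (huv : u ≠ v) : effRes G c u v ≤ qres G c u v := by
  have h1 : 0 < (qres G c u v)⁻¹ := inv_pos.2 (qres_pos G c hconn hpos huv)
  have h2 := effCond_ge G c hconn hpos huv
  have := inv_anti₀ h1 h2
  rwa [inv_inv] at this

lemma qres_expand (u v : V) :
    qres G c u v = (Kmat G c)⁻¹ u u - (Kmat G c)⁻¹ u v - (Kmat G c)⁻¹ v u + (Kmat G c)⁻¹ v v := by
  have hmv : ∀ w : V, ((Kmat G c)⁻¹ *ᵥ bvec u v) w = (Kmat G c)⁻¹ w u - (Kmat G c)⁻¹ w v := by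
    intro w
    simp [Matrix.mulVec, dotProduct, bvec, mul_sub, mul_ite, mul_one, mul_zero,
      Finset.sum_sub_distrib]
  unfold qres
  rw [dot_bvec, hmv u, hmv v]
  ring

lemma foster (hconn : G.Connected) (hpos : ∀ e ∈ G.edgeSet, 0 < c e) :
    ∑ u : V, ∑ v ∈ G.neighborFinset u, c s(u, v) * qres G c u v
      ≤ 2 * (Fintype.card V : ℝ) := by
  set Ki := (Kmat G c)⁻¹ with hKidef
  have hsplit : ∑ u : V, ∑ v ∈ G.neighborFinset u, c s(u, v) * qres G c u v
      = 2 * ∑ u : V, ∑ v ∈ G.neighborFinset u, c s(u, v) * (Ki u u - Ki u v) := by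
    have h1 : ∑ u : V, ∑ v ∈ G.neighborFinset u, c s(u, v) * qres G c u v
        = ∑ u : V, ∑ v ∈ G.neighborFinset u, (c s(u, v) * (Ki u u - Ki u v)
            + c s(u, v) * (Ki v v - Ki v u)) := by
      refine Finset.sum_congr rfl fun u _ => Finset.sum_congr rfl fun v _ => ?_
      rw [qres_expand]
      ring
    have h2 : ∑ u : V, ∑ v ∈ G.neighborFinset u, c s(u, v) * (Ki v v - Ki v u)
        = ∑ u : V, ∑ v ∈ G.neighborFinset u, c s(u, v) * (Ki u u - Ki u v) := by
      rw [sum_nbr_swap G (fun a b => c s(a, b) * (Ki a a - Ki a b))]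
      exact Finset.sum_congr rfl fun u _ => Finset.sum_congr rfl fun v _ => by
        rw [csym c v u]
    rw [h1]
    simp only [Finset.sum_add_distrib]
    rw [h2]
    ring
  rw [hsplit]
  have hrow : ∀ u : V, ∑ v ∈ G.neighborFinset u, c s(u, v) * (Ki u u - Ki u v)
      = ∑ v : V, lap G c u v * Ki u v := by
    intro u
    have : ∑ v : V, lap G c u v * Ki u v
        = ∑ v : V, ((if u = v then vertCond G c u else 0) * Ki u v)
          - ∑ v : V, ((if G.Adj u v then c s(u, v) else 0) * Ki u v) := by
      rw [← Finset.sum_sub_distrib]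
      exact Finset.sum_congr rfl fun v _ => by rw [lap]; simp only [Matrix.of_apply]; ring
    rw [this]
    have hdiag : ∑ v : V, ((if u = v then vertCond G c u else 0) * Ki u v)
        = vertCond G c u * Ki u u := by
      rw [Finset.sum_eq_single u]
      · simp
      · intro b _ hb; rw [if_neg (fun h => hb h.symm), zero_mul]
      · intro h; exact absurd (Finset.mem_univ u) h
    have hoff : ∑ v : V, ((if G.Adj u v then c s(u, v) else 0) * Ki u v)
        = ∑ v ∈ G.neighborFinset u, c s(u, v) * Ki u v := by
      rw [sum_nbr_eq G (fun u v => c s(u, v) * Ki u v) u]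
      exact Finset.sum_congr rfl fun v _ => by split_ifs <;> simp
    rw [hdiag, hoff]
    have hCu : vertCond G c u = ∑ v ∈ G.neighborFinset u, c s(u, v) := by
      unfold vertCond; exact Finset.sum_congr rfl fun v _ => csym c v u
    rw [hCu, Finset.sum_mul, ← Finset.sum_sub_distrib]
    exact Finset.sum_congr rfl fun v _ => by ring
  simp only [hrow]
  have hlapK : ∀ u v : V, lap G c u v = Kmat G c u v - (Fintype.card V : ℝ)⁻¹ := by
    intro u v
    simp [Kmat, Matrix.add_apply, Matrix.smul_apply, smul_eq_mul, mul_one]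
  have hKtr : ∑ u : V, ∑ v : V, Kmat G c u v * Ki u v = (Fintype.card V : ℝ) := by
    have h1 : ∀ u : V, ∑ v : V, Kmat G c u v * Ki u v = (Kmat G c * Ki) u u := by
      intro u
      rw [Matrix.mul_apply]
      exact Finset.sum_congr rfl fun v _ => by rw [hKidef, Ki_symm G c hconn hpos v u]
    simp only [h1, hKidef, hKKi G c hconn hpos, Matrix.one_apply_eq]
    simp only [← hKidef]
    rw [Finset.sum_congr rfl fun u _ => h1 u, hKidef, hKKi G c hconn hpos]
    simp [Finset.card_univ]
  have hJtr : 0 ≤ ∑ u : V, ∑ v : V, Ki u v := by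
    have h := (K_posDef G c hconn hpos).inv.posSemidef.dotProduct_mulVec_nonneg (fun _ => (1:ℝ))
    rw [star_trivial] at h
    have he : (fun _ => (1:ℝ)) ⬝ᵥ (Ki *ᵥ fun _ => (1:ℝ)) = ∑ u : V, ∑ v : V, Ki u v := by
      simp [dotProduct, Matrix.mulVec]
    rw [he] at h
    exact h
  have hfin : ∑ u : V, ∑ v : V, lap G c u v * Ki u v ≤ (Fintype.card V : ℝ) := by
    have : ∑ u : V, ∑ v : V, lap G c u v * Ki u v
        = ∑ u : V, ∑ v : V, Kmat G c u v * Ki u v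
          - (Fintype.card V : ℝ)⁻¹ * ∑ u : V, ∑ v : V, Ki u v := by
      rw [Finset.mul_sum, ← Finset.sum_sub_distrib]
      refine Finset.sum_congr rfl fun u _ => ?_
      rw [Finset.mul_sum, ← Finset.sum_sub_distrib]
      refine Finset.sum_congr rfl fun v _ => ?_
      rw [hlapK u v]
      ring
    rw [this, hKtr]
    have hninv : 0 ≤ (Fintype.card V : ℝ)⁻¹ := by positivity
    nlinarith
  linarith

lemma effCond_le_test (hpos : ∀ e ∈ G.edgeSet, 0 < c e) {u v : V} (hadj : G.Adj u v)
    (hCu : 0 < vertCond G c u) (hCv : 0 < vertCond G c v) :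
    effCond G c u {v}
      ≤ vertCond G c u * vertCond G c v / (vertCond G c u + vertCond G c v) + c s(u, v) := by
  have huv : u ≠ v := hadj.ne
  set Cu := vertCond G c u with hCudef
  set Cv := vertCond G c v with hCvdef
  set t : ℝ := Cu / (Cu + Cv) with htdef
  have hCuv : 0 < Cu + Cv := by linarith
  set h : V → ℝ := fun w => if w = u then 1 else if w = v then 0 else t with hdef
  have hu1 : h u = 1 := by simp [hdef]
  have hv0 : h v = 0 := by simp [hdef, huv.symm, if_neg]
  have step1 : effCond G c u {v} ≤ energy G c h := by
    refine ciInf_le ⟨0, ?_⟩ (⟨h, hu1, fun z hz => by rcases hz with rfl; exact hv0⟩ :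
      {h : V → ℝ // h u = 1 ∧ ∀ z ∈ ({v} : Set V), h z = 0})
    rintro y ⟨i, rfl⟩
    exact energy_nonneg G c hpos _
  have hpt : ∀ x w : V, (h x - h w) ^ 2
      ≤ (if x = u then (1-t)^2 else 0) + (if w = u then (1-t)^2 else 0)
        + (if x = v then t^2 else 0) + (if w = v then t^2 else 0)
        + (if (x = u ∧ w = v) ∨ (x = v ∧ w = u) then 2*t*(1-t) else 0) := by
    intro x w
    simp only [hdef]
    by_cases hxu : x = u <;> by_cases hxv : x = v <;> by_cases hwu : w = u <;>
      by_cases hwv : w = v <;>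
      simp only [hxu, hxv, hwu, hwv, if_true, if_false, ite_true, ite_false, and_self,
        and_true, true_and, or_true, true_or, if_pos rfl] <;>
      simp_all <;>
      nlinarith [sq_nonneg t, sq_nonneg (1-t), sq_nonneg (1-2*t)]
  have step2 : energy G c h ≤ Cu * (1-t)^2 + Cv * t^2 + 2*t*(1-t) * c s(u, v) := by
    have hsum : ∑ w : V, ∑ x ∈ G.neighborFinset w, c s(x, w) * (h x - h w) ^ 2
        ≤ ∑ w : V, ∑ x ∈ G.neighborFinset w, c s(x, w) *
            ((if x = u then (1-t)^2 else 0) + (if w = u then (1-t)^2 else 0)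
              + (if x = v then t^2 else 0) + (if w = v then t^2 else 0)
              + (if (x = u ∧ w = v) ∨ (x = v ∧ w = u) then 2*t*(1-t) else 0)) := by
      refine Finset.sum_le_sum fun w _ => Finset.sum_le_sum fun x hx => ?_
      exact mul_le_mul_of_nonneg_left (hpt x w)
        (c_edge_pos G c hpos (adj_of_mem_nbr G hx).symm).le
    -- now compute the RHS
    have hS1 : ∑ w : V, ∑ x ∈ G.neighborFinset w, c s(x, w) * (if x = u then (1-t)^2 else 0)
        = Cu * (1-t)^2 := by
      have hinner : ∀ w : V, ∑ x ∈ G.neighborFinset w, c s(x, w) * (if x = u then (1-t)^2 else 0)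
          = if w ∈ G.neighborFinset u then c s(u, w) * (1-t)^2 else 0 := by
        intro w
        rw [Finset.sum_congr rfl (fun x _ => by rw [mul_ite, mul_zero]),
          Finset.sum_ite_eq' (G.neighborFinset w) u (fun x => c s(x, w) * (1-t)^2)]
        congr 1
        · simp [SimpleGraph.mem_neighborFinset, G.adj_comm]
      simp only [hinner]
      rw [← Finset.sum_filter]
      rw [Finset.filter_mem_eq_inter, Finset.univ_inter]
      rw [hCudef, vertCond, Finset.sum_mul]
      exact Finset.sum_congr rfl fun w _ => by rw [csym c u w]
    have hS2 : ∑ w : V, ∑ x ∈ G.neighborFinset w, c s(x, w) * (if w = u then (1-t)^2 else 0)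
        = Cu * (1-t)^2 := by
      rw [Finset.sum_eq_single u]
      · rw [hCudef, vertCond, Finset.sum_mul]
        exact Finset.sum_congr rfl fun x _ => by rw [if_pos rfl]
      · intro b _ hb
        exact Finset.sum_eq_zero fun x _ => by rw [if_neg hb, mul_zero]
      · intro habs; exact absurd (Finset.mem_univ u) habs
    have hS3 : ∑ w : V, ∑ x ∈ G.neighborFinset w, c s(x, w) * (if x = v then t^2 else 0)
        = Cv * t^2 := by
      have hinner : ∀ w : V, ∑ x ∈ G.neighborFinset w, c s(x, w) * (if x = v then t^2 else 0)
          = if w ∈ G.neighborFinset v then c s(v, w) * t^2 else 0 := by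
        intro w
        rw [Finset.sum_congr rfl (fun x _ => by rw [mul_ite, mul_zero]),
          Finset.sum_ite_eq' (G.neighborFinset w) v (fun x => c s(x, w) * t^2)]
        congr 1
        · simp [SimpleGraph.mem_neighborFinset, G.adj_comm]
      simp only [hinner]
      rw [← Finset.sum_filter, Finset.filter_mem_eq_inter, Finset.univ_inter,
        hCvdef, vertCond, Finset.sum_mul]
      exact Finset.sum_congr rfl fun w _ => by rw [csym c v w]
    have hS4 : ∑ w : V, ∑ x ∈ G.neighborFinset w, c s(x, w) * (if w = v then t^2 else 0)
        = Cv * t^2 := by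
      rw [Finset.sum_eq_single v]
      · rw [hCvdef, vertCond, Finset.sum_mul]
        exact Finset.sum_congr rfl fun x _ => by rw [if_pos rfl]
      · intro b _ hb
        exact Finset.sum_eq_zero fun x _ => by rw [if_neg hb, mul_zero]
      · intro habs; exact absurd (Finset.mem_univ v) habs
    have hS5 : ∑ w : V, ∑ x ∈ G.neighborFinset w, c s(x, w) *
          (if (x = u ∧ w = v) ∨ (x = v ∧ w = u) then 2*t*(1-t) else 0)
        = 2 * (c s(u, v) * (2*t*(1-t))) := by
      have hsplitpt : ∀ x w : V, (if (x = u ∧ w = v) ∨ (x = v ∧ w = u) then 2*t*(1-t) else 0)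
          = (if x = u ∧ w = v then 2*t*(1-t) else 0) + (if x = v ∧ w = u then 2*t*(1-t) else 0) := by
        intro x w
        by_cases h1 : x = u ∧ w = v <;> by_cases h2 : x = v ∧ w = u
        · exact absurd (h1.1.symm.trans h2.1) huv
        · rw [if_pos (Or.inl h1), if_pos h1, if_neg h2, add_zero]
        · rw [if_pos (Or.inr h2), if_neg h1, if_pos h2, zero_add]
        · rw [if_neg (by tauto), if_neg h1, if_neg h2, add_zero]
      simp only [hsplitpt, mul_add, Finset.sum_add_distrib]
      have hA : ∑ w : V, ∑ x ∈ G.neighborFinset w, c s(x, w) *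
            (if x = u ∧ w = v then 2*t*(1-t) else 0) = c s(u, v) * (2*t*(1-t)) := by
        rw [Finset.sum_eq_single v]
        · have : ∀ x : V, c s(x, v) * (if x = u ∧ v = v then 2*t*(1-t) else 0)
              = if x = u then c s(x, v) * (2*t*(1-t)) else 0 := by
            intro x
            by_cases hx : x = u
            · rw [if_pos ⟨hx, rfl⟩, if_pos hx]
            · rw [if_neg (fun hh => hx hh.1), if_neg hx, mul_zero]
          rw [Finset.sum_congr rfl (fun x _ => this x),
            Finset.sum_ite_eq' (G.neighborFinset v) u (fun x => c s(x, v) * (2*t*(1-t))),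
            if_pos (by rw [SimpleGraph.mem_neighborFinset]; exact hadj.symm)]
        · intro b _ hb
          exact Finset.sum_eq_zero fun x _ => by rw [if_neg (fun hh => hb hh.2), mul_zero]
        · intro habs; exact absurd (Finset.mem_univ v) habs
      have hB : ∑ w : V, ∑ x ∈ G.neighborFinset w, c s(x, w) *
            (if x = v ∧ w = u then 2*t*(1-t) else 0) = c s(u, v) * (2*t*(1-t)) := by
        rw [Finset.sum_eq_single u]
        · have : ∀ x : V, c s(x, u) * (if x = v ∧ u = u then 2*t*(1-t) else 0)
              = if x = v then c s(x, u) * (2*t*(1-t)) else 0 := by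
            intro x
            by_cases hx : x = v
            · rw [if_pos ⟨hx, rfl⟩, if_pos hx]
            · rw [if_neg (fun hh => hx hh.1), if_neg hx, mul_zero]
          rw [Finset.sum_congr rfl (fun x _ => this x),
            Finset.sum_ite_eq' (G.neighborFinset u) v (fun x => c s(x, u) * (2*t*(1-t))),
            if_pos (by rw [SimpleGraph.mem_neighborFinset]; exact hadj),
            csym c v u]
        · intro b _ hb
          exact Finset.sum_eq_zero fun x _ => by rw [if_neg (fun hh => hb hh.2), mul_zero]
        · intro habs; exact absurd (Finset.mem_univ u) habs
      rw [hA, hB]; ring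
    have hcomb : ∑ w : V, ∑ x ∈ G.neighborFinset w, c s(x, w) *
          ((if x = u then (1-t)^2 else 0) + (if w = u then (1-t)^2 else 0)
            + (if x = v then t^2 else 0) + (if w = v then t^2 else 0)
            + (if (x = u ∧ w = v) ∨ (x = v ∧ w = u) then 2*t*(1-t) else 0))
        = 2 * (Cu * (1-t)^2) + 2 * (Cv * t^2) + 2 * (c s(u, v) * (2*t*(1-t))) := by
      simp only [mul_add, Finset.sum_add_distrib]
      rw [hS1, hS2, hS3, hS4, hS5]
      ring
    rw [hcomb] at hsum
    unfold energy
    linarith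
  have halg : Cu * (1-t)^2 + Cv * t^2 + 2*t*(1-t) * c s(u, v)
      ≤ Cu * Cv / (Cu + Cv) + c s(u, v) := by
    have hc0 : 0 ≤ c s(u, v) := (c_edge_pos G c hpos hadj).le
    have h1 : Cu * (1-t)^2 + Cv * t^2 = Cu * Cv / (Cu + Cv) := by
      rw [htdef]
      field_simp
      ring
    have h2 : 2*t*(1-t) ≤ 1 := by nlinarith [sq_nonneg (1-2*t)]
    have h3 : 2*t*(1-t) * c s(u, v) ≤ 1 * c s(u, v) :=
      mul_le_mul_of_nonneg_right h2 hc0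
    linarith
  linarith

lemma aux_inv_bound (s cc : ℝ) (hs : 0 < s) (hc : 0 ≤ cc) :
    s - cc * s ^ 2 ≤ (s⁻¹ + cc)⁻¹ := by
  have hB : 0 < s⁻¹ + cc := by positivity
  have hmul : (s - cc * s ^ 2) * (s⁻¹ + cc) = 1 - cc ^ 2 * s ^ 2 := by
    calc (s - cc * s ^ 2) * (s⁻¹ + cc)
        = s * s⁻¹ + cc * s - cc * s * (s * s⁻¹) - cc ^ 2 * s ^ 2 := by ring
      _ = 1 - cc ^ 2 * s ^ 2 := by rw [mul_inv_cancel₀ hs.ne']; ring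
  have hmul' : (s - cc * s ^ 2) * (s⁻¹ + cc) ≤ 1 := by
    rw [hmul]
    nlinarith [mul_nonneg (mul_nonneg hc hc) (pow_pos hs 2).le]
  have h := mul_le_mul_of_nonneg_right hmul' (inv_nonneg.2 hB.le)
  rwa [one_mul, mul_assoc, mul_inv_cancel₀ hB.ne', mul_one] at h

def Sp (G : SimpleGraph V) [DecidableRel G.Adj] (c : Sym2 V → ℝ) (u v : V) : ℝ :=
  (vertCond G c u)⁻¹ + (vertCond G c v)⁻¹

set_option maxHeartbeats 1000000 in
lemma main_bound (γ δ ε : ℝ) (hconn : G.Connected) (hpos : ∀ e ∈ G.edgeSet, 0 < c e)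
    (hγ : 0 < γ) (hδ2 : δ ≤ 1/2) (hδ0 : 0 ≤ δ)
    (hW : (((Finset.univ.filter fun v : V => γ ≤ vertCond G c v).card : ℝ))
      ≥ (1 - δ) * (Fintype.card V : ℝ))
    (hc : ∀ e ∈ G.edgeSet, c e ≤ δ * γ) (hε : 0 < ε) :
    (∑ u : V, ∑ v ∈ G.neighborFinset u,
        if (vertCond G c u)⁻¹ + (vertCond G c v)⁻¹ + ε ≤ effRes G c u v
          then c s(u, v) else 0)
      ≤ 28 * (δ / ε * γ⁻¹) * (∑ u : V, ∑ v ∈ G.neighborFinset u, c s(u, v)) := by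
  by_cases hcard : Fintype.card V ≤ 1
  · have hsub : Subsingleton V := Fintype.card_le_one_iff_subsingleton.mp hcard
    have hemp : ∀ u : V, G.neighborFinset u = ∅ := fun u =>
      Finset.eq_empty_of_forall_notMem fun v hv => (adj_of_mem_nbr G hv).ne (hsub.elim u v)
    simp [hemp]
  push_neg at hcard
  have : Nonempty V := hconn.nonempty
  -- basic facts
  have hNne : ∀ u : V, (G.neighborFinset u).Nonempty := by
    intro u
    obtain ⟨w, hw⟩ := Fintype.exists_ne_of_one_lt_card hcard u
    obtain ⟨p⟩ := hconn.preconnected u w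
    cases p with
    | nil => exact absurd rfl hw.symm
    | cons hadj _ => exact ⟨_, (SimpleGraph.mem_neighborFinset G u _).mpr hadj⟩
  have hCpos : ∀ u : V, 0 < vertCond G c u := by
    intro u
    refine Finset.sum_pos (fun v hv => c_edge_pos G c hpos (adj_of_mem_nbr G hv).symm) (hNne u)
  have hCalt : ∀ u : V, ∑ v ∈ G.neighborFinset u, c s(u, v) = vertCond G c u := by
    intro u
    unfold vertCond
    exact Finset.sum_congr rfl fun v _ => csym c u v
  have hcnonneg : ∀ {u v : V}, v ∈ G.neighborFinset u → 0 ≤ c s(u, v) := fun hv =>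
    (c_edge_pos G c hpos (adj_of_mem_nbr G hv)).le
  have hcleC : ∀ {u v : V}, v ∈ G.neighborFinset u → c s(u, v) ≤ vertCond G c u := by
    intro u v hv
    rw [← hCalt u]
    exact Finset.single_le_sum (fun w hw => hcnonneg hw) hv
  have hcleδγ : ∀ {u v : V}, v ∈ G.neighborFinset u → c s(u, v) ≤ δ * γ := fun {u v} hv =>
    hc _ (G.mem_edgeSet.mpr (adj_of_mem_nbr G hv))
  set n : ℝ := (Fintype.card V : ℝ) with hndef
  have hn1 : (1:ℝ) ≤ n := by rw [hndef]; exact_mod_cast hcard.le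
  have hSpos : ∀ u v : V, 0 < Sp G c u v := fun u v => by
    have h1 := hCpos u; have h2 := hCpos v
    unfold Sp; positivity
  set D : ℝ := ∑ u : V, ∑ v ∈ G.neighborFinset u, c s(u, v) with hDdef
  -- pointwise bound on the indicator
  have hptmain : ∀ u : V, ∀ v ∈ G.neighborFinset u,
      (if (vertCond G c u)⁻¹ + (vertCond G c v)⁻¹ + ε ≤ effRes G c u v
          then c s(u, v) else 0)
        ≤ ε⁻¹ * (c s(u, v) * (qres G c u v - Sp G c u v + c s(u, v) * (Sp G c u v) ^ 2)) := by
    intro u v hv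
    have hSrw : (vertCond G c u)⁻¹ + (vertCond G c v)⁻¹ = Sp G c u v := rfl
    rw [hSrw]
    have hadj : G.Adj u v := adj_of_mem_nbr G hv
    have huv : u ≠ v := hadj.ne
    have hc0 : 0 ≤ c s(u, v) := hcnonneg hv
    have hRq : effRes G c u v ≤ qres G c u v := effRes_le_qres G c hconn hpos huv
    have hRlow : Sp G c u v - c s(u, v) * (Sp G c u v) ^ 2 ≤ effRes G c u v := by
      have hsinv : (Sp G c u v)⁻¹ = vertCond G c u * vertCond G c v
          / (vertCond G c u + vertCond G c v) := by
        unfold Sp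
        rw [inv_add_inv (hCpos u).ne' (hCpos v).ne', inv_div]
      have hEC : effCond G c u {v} ≤ (Sp G c u v)⁻¹ + c s(u, v) := by
        rw [hsinv]
        exact effCond_le_test G c hpos hadj (hCpos u) (hCpos v)
      have hECpos : 0 < effCond G c u {v} := effCond_pos G c hconn hpos huv
      have hinv : ((Sp G c u v)⁻¹ + c s(u, v))⁻¹ ≤ (effCond G c u {v})⁻¹ :=
        inv_anti₀ hECpos hEC
      have hlb : Sp G c u v - c s(u, v) * (Sp G c u v) ^ 2 ≤ ((Sp G c u v)⁻¹ + c s(u, v))⁻¹ :=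
        aux_inv_bound _ _ (hSpos u v) hc0
      calc Sp G c u v - c s(u, v) * (Sp G c u v) ^ 2 ≤ ((Sp G c u v)⁻¹ + c s(u, v))⁻¹ := hlb
        _ ≤ (effCond G c u {v})⁻¹ := hinv
        _ = effRes G c u v := rfl
    have hM0 : 0 ≤ qres G c u v - Sp G c u v + c s(u, v) * (Sp G c u v) ^ 2 := by linarith
    by_cases hbad : Sp G c u v + ε ≤ effRes G c u v
    · rw [if_pos hbad]
      have hMε : ε ≤ qres G c u v - Sp G c u v + c s(u, v) * (Sp G c u v) ^ 2 := by
        nlinarith [mul_nonneg hc0 (sq_nonneg (Sp G c u v))]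
      have h1 : 1 ≤ ε⁻¹ * (qres G c u v - Sp G c u v + c s(u, v) * (Sp G c u v) ^ 2) := by
        rw [← mul_inv_cancel₀ hε.ne']
        rw [mul_comm ε ε⁻¹]
        exact mul_le_mul_of_nonneg_left hMε (inv_nonneg.2 hε.le)
      calc c s(u, v) = c s(u, v) * 1 := by ring
        _ ≤ c s(u, v) * (ε⁻¹ * (qres G c u v - Sp G c u v + c s(u, v) * (Sp G c u v) ^ 2)) :=
            mul_le_mul_of_nonneg_left h1 hc0
        _ = ε⁻¹ * (c s(u, v) * (qres G c u v - Sp G c u v + c s(u, v) * (Sp G c u v) ^ 2)) := by ring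
    · rw [if_neg hbad]
      have := mul_nonneg hc0 hM0
      positivity
  -- sum of the M-terms
  have hT2 : ∑ u : V, ∑ v ∈ G.neighborFinset u, c s(u, v) * Sp G c u v = 2 * n := by
    have hsplit : ∀ u : V, ∀ v ∈ G.neighborFinset u, c s(u, v) * Sp G c u v
        = c s(u, v) * (vertCond G c u)⁻¹ + c s(u, v) * (vertCond G c v)⁻¹ := by
      intro u v _; unfold Sp; ring
    rw [Finset.sum_congr rfl fun u _ => Finset.sum_congr rfl (hsplit u)]
    simp only [Finset.sum_add_distrib]
    have hswap2 : ∑ u : V, ∑ v ∈ G.neighborFinset u, c s(u, v) * (vertCond G c v)⁻¹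
        = ∑ u : V, ∑ v ∈ G.neighborFinset u, c s(u, v) * (vertCond G c u)⁻¹ := by
      rw [sum_nbr_swap G (fun a b => c s(a, b) * (vertCond G c a)⁻¹)]
      exact Finset.sum_congr rfl fun u _ => Finset.sum_congr rfl fun v _ => by rw [csym c v u]
    rw [hswap2]
    have hone : ∀ u : V, ∑ v ∈ G.neighborFinset u, c s(u, v) * (vertCond G c u)⁻¹ = 1 := by
      intro u
      rw [← Finset.sum_mul, hCalt u, mul_inv_cancel₀ (hCpos u).ne']
    simp only [hone]
    simp [hndef, Finset.card_univ]
    ring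
  have hT1 : ∑ u : V, ∑ v ∈ G.neighborFinset u, c s(u, v) * qres G c u v ≤ 2 * n :=
    foster G c hconn hpos
  -- the error-term sum
  set m : ℝ := ((Finset.univ.filter fun v : V => ¬ γ ≤ vertCond G c v).card : ℝ) with hmdef
  have hmδn : m ≤ δ * n := by
    have hcards := Finset.card_filter_add_card_filter_not
      (s := (Finset.univ : Finset V)) (p := fun v : V => γ ≤ vertCond G c v)
    have : m = n - ((Finset.univ.filter fun v : V => γ ≤ vertCond G c v).card : ℝ) := by
      rw [hmdef, hndef]
      have := congrArg (fun k : ℕ => (k : ℝ)) hcards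
      push_cast at this
      simp only [Finset.card_univ] at this
      linarith
    rw [this]
    nlinarith [hW]
  have hγinv : 0 < γ⁻¹ := inv_pos.2 hγ
  set W := Finset.univ.filter fun v : V => γ ≤ vertCond G c v with hWdef
  have hD0 : 0 ≤ D := Finset.sum_nonneg fun u _ => Finset.sum_nonneg fun v hv => hcnonneg hv
  -- crude always-true bound and the sharp W-W bound
  have hcS2 : ∀ u : V, ∀ v ∈ G.neighborFinset u, c s(u, v) * Sp G c u v ≤ 2 := by
    intro u v hv
    have hadj := adj_of_mem_nbr G hv
    have hc0 := hcnonneg hv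
    have h1 : c s(u, v) * (vertCond G c u)⁻¹ ≤ 1 := by
      have := mul_le_mul_of_nonneg_right (hcleC hv) (inv_nonneg.2 (hCpos u).le)
      rwa [mul_inv_cancel₀ (hCpos u).ne'] at this
    have hvu : u ∈ G.neighborFinset v := (SimpleGraph.mem_neighborFinset G v u).mpr hadj.symm
    have hcv : c s(u, v) ≤ vertCond G c v := by
      rw [csym c u v]; exact hcleC hvu
    have h2 : c s(u, v) * (vertCond G c v)⁻¹ ≤ 1 := by
      have := mul_le_mul_of_nonneg_right hcv (inv_nonneg.2 (hCpos v).le)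
      rwa [mul_inv_cancel₀ (hCpos v).ne'] at this
    have : c s(u, v) * Sp G c u v = c s(u, v) * (vertCond G c u)⁻¹
        + c s(u, v) * (vertCond G c v)⁻¹ := by unfold Sp; ring
    linarith
  have hpt3 : ∀ u : V, ∀ v ∈ G.neighborFinset u,
      c s(u, v) * (c s(u, v) * (Sp G c u v) ^ 2) ≤ 4 * δ * γ⁻¹ * c s(u, v)
        + ((if γ ≤ vertCond G c u then 0 else 2 * (c s(u, v) * Sp G c u v))
          + (if γ ≤ vertCond G c v then 0 else 2 * (c s(u, v) * Sp G c u v))) := by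
    intro u v hv
    have hc0 : 0 ≤ c s(u, v) := hcnonneg hv
    have hS0 : 0 < Sp G c u v := hSpos u v
    have hcS0 : 0 ≤ c s(u, v) * Sp G c u v := mul_nonneg hc0 hS0.le
    have h4δ : 0 ≤ 4 * δ * γ⁻¹ * c s(u, v) := by positivity
    have hcrude : c s(u, v) * (c s(u, v) * (Sp G c u v) ^ 2) ≤ 2 * (c s(u, v) * Sp G c u v) := by
      nlinarith [hcS2 u v hv, hcS0]
    by_cases hu : γ ≤ vertCond G c u
    · by_cases hvv : γ ≤ vertCond G c v
      · rw [if_pos hu, if_pos hvv]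
        have hCuinv : (vertCond G c u)⁻¹ ≤ γ⁻¹ := inv_anti₀ hγ hu
        have hCvinv : (vertCond G c v)⁻¹ ≤ γ⁻¹ := inv_anti₀ hγ hvv
        have hSle : Sp G c u v ≤ 2 * γ⁻¹ := by unfold Sp; linarith
        have h1 : c s(u, v) * Sp G c u v ≤ δ * γ * (2 * γ⁻¹) :=
          mul_le_mul (hcleδγ hv) hSle hS0.le (by positivity)
        have h2 : δ * γ * (2 * γ⁻¹) = 2 * δ := by
          calc δ * γ * (2 * γ⁻¹) = 2 * δ * (γ * γ⁻¹) := by ring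
            _ = 2 * δ := by rw [mul_inv_cancel₀ hγ.ne', mul_one]
        have h3 : c s(u, v) * Sp G c u v ≤ c s(u, v) * (2 * γ⁻¹) :=
          mul_le_mul_of_nonneg_left hSle hc0
        have hsharp : c s(u, v) * (c s(u, v) * (Sp G c u v) ^ 2) ≤ 4 * δ * γ⁻¹ * c s(u, v) := by
          calc c s(u, v) * (c s(u, v) * (Sp G c u v) ^ 2)
              = (c s(u, v) * Sp G c u v) * (c s(u, v) * Sp G c u v) := by ring
            _ ≤ (2 * δ) * (c s(u, v) * Sp G c u v) :=
                mul_le_mul_of_nonneg_right (h1.trans_eq h2) hcS0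
            _ ≤ (2 * δ) * (c s(u, v) * (2 * γ⁻¹)) :=
                mul_le_mul_of_nonneg_left h3 (by linarith)
            _ = 4 * δ * γ⁻¹ * c s(u, v) := by ring
        linarith
      · rw [if_pos hu, if_neg hvv]
        linarith
    · rw [if_neg hu]
      have : 0 ≤ (if γ ≤ vertCond G c v then (0:ℝ) else 2 * (c s(u, v) * Sp G c u v)) := by
        split_ifs
        · exact le_refl 0
        · exact mul_nonneg (by norm_num) hcS0
      linarith
  -- summing the error ites
  have hsum_boole : ∀ (P : V → Prop) [DecidablePred P],
      ∑ u : V, (if P u then (0:ℝ) else 2) = 2 * ((Finset.univ.filter fun u => ¬ P u).card : ℝ) := by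
    intro P _
    rw [← Finset.sum_boole]
    rw [Finset.mul_sum]
    refine Finset.sum_congr rfl fun u _ => ?_
    by_cases h : P u <;> simp [h]
  -- A1 : the own-vertex part
  have hA1sum : ∑ u : V, ∑ v ∈ G.neighborFinset u,
      (if γ ≤ vertCond G c u then (0:ℝ) else 2 * (c s(u, v) * (vertCond G c u)⁻¹)) = 2 * m := by
    have hrow : ∀ u : V, ∑ v ∈ G.neighborFinset u,
        (if γ ≤ vertCond G c u then (0:ℝ) else 2 * (c s(u, v) * (vertCond G c u)⁻¹))
        = if γ ≤ vertCond G c u then 0 else 2 := by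
      intro u
      by_cases hu : γ ≤ vertCond G c u
      · simp [hu]
      · simp only [if_neg hu]
        have : ∀ v ∈ G.neighborFinset u, 2 * (c s(u, v) * (vertCond G c u)⁻¹)
            = c s(u, v) * (2 * (vertCond G c u)⁻¹) := fun v _ => by ring
        rw [Finset.sum_congr rfl this, ← Finset.sum_mul, hCalt u]
        rw [mul_comm, mul_assoc, inv_mul_cancel₀ (hCpos u).ne']
        norm_num
    rw [Finset.sum_congr rfl fun u _ => hrow u]
    rw [hsum_boole]
  -- row sums bounded by 2 for the γ⁻¹-part
  have hA2asum : ∑ u : V, ∑ v ∈ G.neighborFinset u,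
      (if γ ≤ vertCond G c u then (0:ℝ) else 2 * γ⁻¹ * c s(u, v)) ≤ 2 * m := by
    have hrow : ∀ u : V, ∑ v ∈ G.neighborFinset u,
        (if γ ≤ vertCond G c u then (0:ℝ) else 2 * γ⁻¹ * c s(u, v))
        ≤ if γ ≤ vertCond G c u then 0 else 2 := by
      intro u
      by_cases hu : γ ≤ vertCond G c u
      · simp [hu]
      · simp only [if_neg hu]
        have : ∀ v ∈ G.neighborFinset u, (2 * γ⁻¹ * c s(u, v)) = c s(u, v) * (2 * γ⁻¹) :=
          fun v _ => by ring
        rw [Finset.sum_congr rfl this, ← Finset.sum_mul, hCalt u]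
        have hCu : vertCond G c u ≤ γ := (not_le.mp hu).le
        have := mul_le_mul_of_nonneg_right hCu (by positivity : (0:ℝ) ≤ 2 * γ⁻¹)
        have hγγ : γ * (2 * γ⁻¹) = 2 := by
          calc γ * (2 * γ⁻¹) = 2 * (γ * γ⁻¹) := by ring
            _ = 2 := by rw [mul_inv_cancel₀ hγ.ne', mul_one]
        linarith
    calc ∑ u : V, ∑ v ∈ G.neighborFinset u,
        (if γ ≤ vertCond G c u then (0:ℝ) else 2 * γ⁻¹ * c s(u, v))
        ≤ ∑ u : V, if γ ≤ vertCond G c u then (0:ℝ) else 2 :=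
          Finset.sum_le_sum fun u _ => hrow u
      _ = 2 * m := hsum_boole _
  -- the cross part, via swapping
  have hA2bsum : ∑ u : V, ∑ v ∈ G.neighborFinset u,
      (if γ ≤ vertCond G c v then (0:ℝ) else 2 * (c s(u, v) * (vertCond G c v)⁻¹)) = 2 * m := by
    calc ∑ u : V, ∑ v ∈ G.neighborFinset u,
        (if γ ≤ vertCond G c v then (0:ℝ) else 2 * (c s(u, v) * (vertCond G c v)⁻¹))
        = ∑ u : V, ∑ v ∈ G.neighborFinset u,
          (if γ ≤ vertCond G c v then (0:ℝ) else 2 * (c s(v, u) * (vertCond G c v)⁻¹)) := by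
          refine Finset.sum_congr rfl fun u _ => Finset.sum_congr rfl fun v _ => ?_
          rw [csym c u v]
      _ = ∑ u : V, ∑ v ∈ G.neighborFinset u,
          (if γ ≤ vertCond G c u then (0:ℝ) else 2 * (c s(u, v) * (vertCond G c u)⁻¹)) :=
          (sum_nbr_swap G (fun a b =>
            if γ ≤ vertCond G c a then (0:ℝ) else 2 * (c s(a, b) * (vertCond G c a)⁻¹))).symm
      _ = 2 * m := hA1sum
  -- combine : each single-ite sum ≤ 6m
  have hAsum : ∑ u : V, ∑ v ∈ G.neighborFinset u,
      (if γ ≤ vertCond G c u then (0:ℝ) else 2 * (c s(u, v) * Sp G c u v)) ≤ 6 * m := by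
    have hptA : ∀ u : V, ∀ v ∈ G.neighborFinset u,
        (if γ ≤ vertCond G c u then (0:ℝ) else 2 * (c s(u, v) * Sp G c u v))
        ≤ (if γ ≤ vertCond G c u then (0:ℝ) else 2 * (c s(u, v) * (vertCond G c u)⁻¹))
          + ((if γ ≤ vertCond G c u then (0:ℝ) else 2 * γ⁻¹ * c s(u, v))
            + (if γ ≤ vertCond G c v then (0:ℝ) else 2 * (c s(u, v) * (vertCond G c v)⁻¹))) := by
      intro u v hv
      have hc0 := hcnonneg hv
      have hCvi : 0 ≤ (vertCond G c v)⁻¹ := (inv_nonneg.2 (hCpos v).le)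
      have hCui : 0 ≤ (vertCond G c u)⁻¹ := (inv_nonneg.2 (hCpos u).le)
      by_cases hu : γ ≤ vertCond G c u
      · simp only [if_pos hu]
        split_ifs
        · norm_num
        · have : 0 ≤ 2 * (c s(u, v) * (vertCond G c v)⁻¹) := by positivity
          linarith
      · simp only [if_neg hu]
        by_cases hvv : γ ≤ vertCond G c v
        · simp only [if_pos hvv]
          have hCvγ : (vertCond G c v)⁻¹ ≤ γ⁻¹ := inv_anti₀ hγ hvv
          have : c s(u, v) * Sp G c u v = c s(u, v) * (vertCond G c u)⁻¹
              + c s(u, v) * (vertCond G c v)⁻¹ := by unfold Sp; ring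
          have h2 : c s(u, v) * (vertCond G c v)⁻¹ ≤ γ⁻¹ * c s(u, v) := by
            rw [mul_comm (γ⁻¹)]
            exact mul_le_mul_of_nonneg_left hCvγ hc0
          linarith
        · simp only [if_neg hvv]
          have : c s(u, v) * Sp G c u v = c s(u, v) * (vertCond G c u)⁻¹
              + c s(u, v) * (vertCond G c v)⁻¹ := by unfold Sp; ring
          have h0 : 0 ≤ 2 * γ⁻¹ * c s(u, v) := by positivity
          linarith
    calc ∑ u : V, ∑ v ∈ G.neighborFinset u,
        (if γ ≤ vertCond G c u then (0:ℝ) else 2 * (c s(u, v) * Sp G c u v))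
        ≤ ∑ u : V, ∑ v ∈ G.neighborFinset u,
          ((if γ ≤ vertCond G c u then (0:ℝ) else 2 * (c s(u, v) * (vertCond G c u)⁻¹))
            + ((if γ ≤ vertCond G c u then (0:ℝ) else 2 * γ⁻¹ * c s(u, v))
              + (if γ ≤ vertCond G c v then (0:ℝ) else 2 * (c s(u, v) * (vertCond G c v)⁻¹)))) :=
          Finset.sum_le_sum fun u _ => Finset.sum_le_sum fun v hv => hptA u v hv
      _ = 2 * m + (∑ u : V, ∑ v ∈ G.neighborFinset u,
            (if γ ≤ vertCond G c u then (0:ℝ) else 2 * γ⁻¹ * c s(u, v)) + 2 * m) := by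
          simp only [Finset.sum_add_distrib]
          rw [hA1sum, hA2bsum]
      _ ≤ 2 * m + (2 * m + 2 * m) := by linarith [hA2asum]
      _ = 6 * m := by ring
  have hBsum : ∑ u : V, ∑ v ∈ G.neighborFinset u,
      (if γ ≤ vertCond G c v then (0:ℝ) else 2 * (c s(u, v) * Sp G c u v)) ≤ 6 * m := by
    have hstep : ∑ u : V, ∑ v ∈ G.neighborFinset u,
        (if γ ≤ vertCond G c v then (0:ℝ) else 2 * (c s(u, v) * Sp G c u v))
        = ∑ u : V, ∑ v ∈ G.neighborFinset u,
          (if γ ≤ vertCond G c u then (0:ℝ) else 2 * (c s(u, v) * Sp G c u v)) := by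
      calc ∑ u : V, ∑ v ∈ G.neighborFinset u,
          (if γ ≤ vertCond G c v then (0:ℝ) else 2 * (c s(u, v) * Sp G c u v))
          = ∑ u : V, ∑ v ∈ G.neighborFinset u,
            (if γ ≤ vertCond G c v then (0:ℝ) else 2 * (c s(v, u) * Sp G c v u)) := by
            refine Finset.sum_congr rfl fun u _ => Finset.sum_congr rfl fun v _ => ?_
            rw [csym c u v]
            have hSp : Sp G c v u = Sp G c u v := by unfold Sp; ring
            rw [hSp]
        _ = ∑ u : V, ∑ v ∈ G.neighborFinset u,
            (if γ ≤ vertCond G c u then (0:ℝ) else 2 * (c s(u, v) * Sp G c u v)) :=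
            (sum_nbr_swap G (fun a b =>
              if γ ≤ vertCond G c a then (0:ℝ) else 2 * (c s(a, b) * Sp G c a b))).symm
    rw [hstep]
    exact hAsum
  -- total error sum
  have hT3 : ∑ u : V, ∑ v ∈ G.neighborFinset u, c s(u, v) * (c s(u, v) * (Sp G c u v) ^ 2)
      ≤ 4 * δ * γ⁻¹ * D + 12 * m := by
    calc ∑ u : V, ∑ v ∈ G.neighborFinset u, c s(u, v) * (c s(u, v) * (Sp G c u v) ^ 2)
        ≤ ∑ u : V, ∑ v ∈ G.neighborFinset u, (4 * δ * γ⁻¹ * c s(u, v)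
          + ((if γ ≤ vertCond G c u then 0 else 2 * (c s(u, v) * Sp G c u v))
            + (if γ ≤ vertCond G c v then 0 else 2 * (c s(u, v) * Sp G c u v)))) :=
          Finset.sum_le_sum fun u _ => Finset.sum_le_sum fun v hv => hpt3 u v hv
      _ = 4 * δ * γ⁻¹ * D
          + (∑ u : V, ∑ v ∈ G.neighborFinset u,
              (if γ ≤ vertCond G c u then (0:ℝ) else 2 * (c s(u, v) * Sp G c u v))
            + ∑ u : V, ∑ v ∈ G.neighborFinset u,
              (if γ ≤ vertCond G c v then (0:ℝ) else 2 * (c s(u, v) * Sp G c u v))) := by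
          simp only [Finset.sum_add_distrib]
          have hfst : 4 * δ * γ⁻¹ * D = ∑ u : V, ∑ v ∈ G.neighborFinset u,
              4 * δ * γ⁻¹ * c s(u, v) := by
            rw [hDdef, Finset.mul_sum]
            exact Finset.sum_congr rfl fun u _ => Finset.mul_sum _ _ _
          rw [hfst]
      _ ≤ 4 * δ * γ⁻¹ * D + 12 * m := by linarith
  -- lower bound on D
  have hDlow : (1 - δ) * n * γ ≤ D := by
    have hDC : D = ∑ u : V, vertCond G c u := by
      rw [hDdef]
      exact Finset.sum_congr rfl fun u _ => hCalt u
    have h1 : ∑ u ∈ W, vertCond G c u ≤ ∑ u : V, vertCond G c u :=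
      Finset.sum_le_sum_of_subset_of_nonneg (Finset.subset_univ W)
        (fun u _ _ => (hCpos u).le)
    have h2 : (W.card : ℝ) * γ ≤ ∑ u ∈ W, vertCond G c u := by
      have := Finset.sum_le_sum (s := W) (fun u hu => (Finset.mem_filter.mp hu).2)
      rw [Finset.sum_const, nsmul_eq_mul] at this
      linarith
    have h3 : (1 - δ) * n ≤ (W.card : ℝ) := hW
    have h4 : (1 - δ) * n * γ ≤ (W.card : ℝ) * γ :=
      mul_le_mul_of_nonneg_right h3 hγ.le
    rw [hDC]
    linarith
  have hnD : n ≤ 2 * γ⁻¹ * D := by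
    have hnγ0 : (0:ℝ) ≤ n * γ := mul_nonneg (by linarith) hγ.le
    have hmain : (1 - δ) * n * γ = n * γ - δ * (n * γ) := by ring
    have hδn : δ * (n * γ) ≤ (1/2) * (n * γ) := mul_le_mul_of_nonneg_right hδ2 hnγ0
    have h5 : γ * n ≤ 2 * D := by linarith
    have := mul_le_mul_of_nonneg_left h5 hγinv.le
    rw [← mul_assoc, inv_mul_cancel₀ hγ.ne', one_mul] at this
    linarith
  -- final assembly
  have hnum : (∑ u : V, ∑ v ∈ G.neighborFinset u,
        if (vertCond G c u)⁻¹ + (vertCond G c v)⁻¹ + ε ≤ effRes G c u v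
          then c s(u, v) else 0)
      ≤ ε⁻¹ * ∑ u : V, ∑ v ∈ G.neighborFinset u,
          (c s(u, v) * (qres G c u v - Sp G c u v + c s(u, v) * (Sp G c u v) ^ 2)) := by
    rw [Finset.mul_sum]
    refine Finset.sum_le_sum fun u _ => ?_
    rw [Finset.mul_sum]
    exact Finset.sum_le_sum fun v hv => hptmain u v hv
  have hsplitT : ∑ u : V, ∑ v ∈ G.neighborFinset u,
        (c s(u, v) * (qres G c u v - Sp G c u v + c s(u, v) * (Sp G c u v) ^ 2))
      = ∑ u : V, ∑ v ∈ G.neighborFinset u, c s(u, v) * qres G c u v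
        - ∑ u : V, ∑ v ∈ G.neighborFinset u, c s(u, v) * Sp G c u v
        + ∑ u : V, ∑ v ∈ G.neighborFinset u, c s(u, v) * (c s(u, v) * (Sp G c u v) ^ 2) := by
    have h1 : ∑ u : V, ∑ v ∈ G.neighborFinset u,
        (c s(u, v) * (qres G c u v - Sp G c u v + c s(u, v) * (Sp G c u v) ^ 2))
        = ∑ u : V, ∑ v ∈ G.neighborFinset u, (c s(u, v) * qres G c u v
            - c s(u, v) * Sp G c u v + c s(u, v) * (c s(u, v) * (Sp G c u v) ^ 2)) :=
      Finset.sum_congr rfl fun u _ => Finset.sum_congr rfl fun v _ => by ring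
    rw [h1]
    simp only [Finset.sum_add_distrib, Finset.sum_sub_distrib]
  have hTfull : ∑ u : V, ∑ v ∈ G.neighborFinset u,
        (c s(u, v) * (qres G c u v - Sp G c u v + c s(u, v) * (Sp G c u v) ^ 2))
      ≤ 4 * δ * γ⁻¹ * D + 12 * m := by
    rw [hsplitT, hT2]
    linarith
  have hmn : 12 * m ≤ 12 * δ * (2 * γ⁻¹ * D) := by
    have h1 : m ≤ δ * n := hmδn
    have h2 : δ * n ≤ δ * (2 * γ⁻¹ * D) := mul_le_mul_of_nonneg_left hnD hδ0
    linarith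
  have hend : ε⁻¹ * (4 * δ * γ⁻¹ * D + 12 * m) ≤ 28 * (δ / ε * γ⁻¹) * D := by
    have h1 : 4 * δ * γ⁻¹ * D + 12 * m ≤ 28 * δ * γ⁻¹ * D := by linarith
    have h2 := mul_le_mul_of_nonneg_left h1 (inv_nonneg.2 hε.le)
    calc ε⁻¹ * (4 * δ * γ⁻¹ * D + 12 * m) ≤ ε⁻¹ * (28 * δ * γ⁻¹ * D) := h2
      _ = 28 * (δ / ε * γ⁻¹) * D := by rw [div_eq_mul_inv]; ring
  exact hnum.trans (le_trans (mul_le_mul_of_nonneg_left hTfull (inv_nonneg.2 hε.le)) hend)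


end Aux

/-- Under Assumption (EO) (with `Gₙ` simple and `cₙ` connected), if a random
edge `(X₁, X₂)` of `Gₙ` is chosen with probability proportional to its conductance, then for
every `ε > 0`:  `P(R_eff(X₁↔X₂) ≥ 1/C_{X₁} + 1/C_{X₂} + ε) ≤ (O(δₙ)/ε)·(1/γₙ)`.
(The probability of the (symmetric) event is written as a ratio of sums over ordered
adjacent pairs.) -/
theorem effRes_random_edge
    (V : ℕ → Type) [∀ n, Fintype (V n)] [∀ n, DecidableEq (V n)]
    (G : ∀ n, SimpleGraph (V n)) [∀ n, DecidableRel (G n).Adj]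
    (c : ∀ n, Sym2 (V n) → ℝ) (γ : ℕ → ℝ) (δ : ℕ → ℝ)
    (hconn : ∀ n, (G n).Connected)
    (hpos : ∀ n, ∀ e ∈ (G n).edgeSet, 0 < c n e)
    (hγ : ∀ n, 0 < γ n)
    (hδ : Tendsto δ atTop (nhds 0))
    (hW : ∀ᶠ n in atTop,
      (((Finset.univ.filter fun v : V n => γ n ≤ vertCond (G n) (c n) v).card : ℝ))
        ≥ (1 - δ n) * (Fintype.card (V n) : ℝ))
    (hc : ∀ᶠ n in atTop, ∀ e ∈ (G n).edgeSet, c n e ≤ δ n * γ n) :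
    ∀ ε : ℝ, 0 < ε →
      (fun n => (∑ u : V n, ∑ v ∈ (G n).neighborFinset u,
          if (vertCond (G n) (c n) u)⁻¹ + (vertCond (G n) (c n) v)⁻¹ + ε ≤
              effRes (G n) (c n) u v
            then c n s(u, v) else 0) /
        (∑ u : V n, ∑ v ∈ (G n).neighborFinset u, c n s(u, v)))
      =O[atTop] fun n => δ n / ε * (γ n)⁻¹ := by
  intro ε hε
  rw [Asymptotics.isBigO_iff]
  refine ⟨28, ?_⟩
  have hδhalf : ∀ᶠ n in atTop, δ n ≤ 1/2 :=
    hδ.eventually (eventually_le_nhds (by norm_num : (0:ℝ) < 1/2))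
  filter_upwards [hW, hc, hδhalf] with n hWn hcn hδn
  have hnV : Nonempty (V n) := (hconn n).nonempty
  have hn1 : (1:ℝ) ≤ (Fintype.card (V n) : ℝ) := by
    exact_mod_cast Fintype.card_pos
  have hδ0 : 0 ≤ δ n := by
    have hle : ((Finset.univ.filter fun v : V n => γ n ≤ vertCond (G n) (c n) v).card : ℝ)
        ≤ (Fintype.card (V n) : ℝ) := by
      rw [← Finset.card_univ]
      exact_mod_cast Finset.card_filter_le _ _
    nlinarith [hWn, hn1]
  have hkey := main_bound (G n) (c n) (γ n) (δ n) ε (hconn n) (hpos n) (hγ n) hδn hδ0 hWn hcn hε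
  have hnum0 : 0 ≤ ∑ u : V n, ∑ v ∈ (G n).neighborFinset u,
      if (vertCond (G n) (c n) u)⁻¹ + (vertCond (G n) (c n) v)⁻¹ + ε ≤
          effRes (G n) (c n) u v
        then c n s(u, v) else 0 := by
    refine Finset.sum_nonneg fun u _ => Finset.sum_nonneg fun v hv => ?_
    split_ifs
    · exact (c_edge_pos (G n) (c n) (hpos n) (adj_of_mem_nbr (G n) hv)).le
    · exact le_refl 0
  have hden0 : 0 ≤ ∑ u : V n, ∑ v ∈ (G n).neighborFinset u, c n s(u, v) :=
    Finset.sum_nonneg fun u _ => Finset.sum_nonneg fun v hv =>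
      (c_edge_pos (G n) (c n) (hpos n) (adj_of_mem_nbr (G n) hv)).le
  have hrhs0 : 0 ≤ δ n / ε * (γ n)⁻¹ := by
    have := (hγ n); positivity
  rw [Real.norm_eq_abs, Real.norm_eq_abs, abs_of_nonneg (div_nonneg hnum0 hden0),
    abs_of_nonneg hrhs0]
  rcases eq_or_lt_of_le hden0 with hden | hden
  · have hnum_le : (∑ u : V n, ∑ v ∈ (G n).neighborFinset u,
        if (vertCond (G n) (c n) u)⁻¹ + (vertCond (G n) (c n) v)⁻¹ + ε ≤
            effRes (G n) (c n) u v
          then c n s(u, v) else 0) ≤ 0 := by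
      calc _ ≤ 28 * (δ n / ε * (γ n)⁻¹) * (∑ u : V n, ∑ v ∈ (G n).neighborFinset u,
          c n s(u, v)) := hkey
        _ = 0 := by rw [← hden]; ring
    have : (∑ u : V n, ∑ v ∈ (G n).neighborFinset u,
        if (vertCond (G n) (c n) u)⁻¹ + (vertCond (G n) (c n) v)⁻¹ + ε ≤
            effRes (G n) (c n) u v
          then c n s(u, v) else 0) = 0 := le_antisymm hnum_le hnum0
    rw [this, zero_div]
    positivity
  · rw [div_le_iff₀ hden]
    exact hkey


end WSTPaper
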